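/- arXiv:1105.2707 — 4 statements merged into one kernel-verified Lean document; each statement's English description precedes it below -/
import Mathlib

section
/- Fix a real s with s ≠ 0 and s ≠ 1, and let n_{L_s}(t) denote the partial derivative ∂L_s(p,r)/∂r evaluated at (p,r) = (t,1) for t > 0. Then n_{L_s} is strictly decreasing on (0,∞), n_{L_s}(1) = 0, and consequently n_{L_s}(t) > 0 for 0 < t < 1 and n_{L_s}(t) < 0 for t > 1. -/
open Real Set

/-- Generalized arithmetic–geometric mean divergence of type `s` (pointwise). -/
noncomputable def Ls (s p q : ℝ) : ℝ :=
  (s * (s - 1))⁻¹ * (((p ^ s + q ^ s) / 2) * ((p + q) / 2) ^ (1 - s) - (p + q) / 2)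

/-- `n_{L_s}(t)`: the partial derivative `∂L_s(p,r)/∂r` evaluated at `(p,r) = (t,1)`. -/
noncomputable def nLs (s : ℝ) (t : ℝ) : ℝ :=
  deriv (fun r => Ls s t r) 1

noncomputable def gLs (s t : ℝ) : ℝ :=
  (s * (s - 1))⁻¹ *
    (s / 2 * ((t + 1) / 2) ^ (1 - s) + (1 - s) / 4 * ((t ^ s + 1) * ((t + 1) / 2) ^ (-s)) - 1 / 2)

lemma nLs_eq (s : ℝ) {t : ℝ} (ht : 0 < t) : nLs s t = gLs s t := by
  have hm : (0 : ℝ) < (t + 1) / 2 := by linarith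
  have h1 : HasDerivAt (fun r : ℝ => r ^ s) (s * (1 : ℝ) ^ (s - 1)) 1 :=
    Real.hasDerivAt_rpow_const (Or.inl one_ne_zero)
  have h2 : HasDerivAt (fun r : ℝ => (t + r) / 2) (1 / 2) 1 := by
    simpa using ((hasDerivAt_id (1 : ℝ)).const_add t).div_const 2
  have h3 : HasDerivAt (fun r : ℝ => ((t + r) / 2) ^ (1 - s))
      ((1 - s) * ((t + 1) / 2) ^ (1 - s - 1) * (1 / 2)) 1 :=
    by have := (Real.hasDerivAt_rpow_const (p := 1 - s) (Or.inl hm.ne')).comp 1 h2; exact this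
  have h4 : HasDerivAt (fun r : ℝ => (t ^ s + r ^ s) / 2) (s * (1 : ℝ) ^ (s - 1) / 2) 1 :=
    (h1.const_add (t ^ s)).div_const 2
  have h5 := ((h4.mul h3).sub h2).const_mul ((s * (s - 1))⁻¹)
  have h6 : HasDerivAt (fun r => Ls s t r)
      ((s * (s - 1))⁻¹ *
        ((s * (1 : ℝ) ^ (s - 1) / 2) * ((t + 1) / 2) ^ (1 - s) +
          (t ^ s + (1 : ℝ) ^ s) / 2 * ((1 - s) * ((t + 1) / 2) ^ (1 - s - 1) * (1 / 2)) -
          1 / 2)) 1 := by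
    simpa [Ls] using h5
  rw [nLs, h6.deriv, gLs]
  rw [Real.one_rpow, Real.one_rpow, show (1 - s - 1 : ℝ) = -s by ring]
  ring

lemma hasDerivAt_gLs (s : ℝ) (hs0 : s ≠ 0) (hs1 : s ≠ 1) {t : ℝ} (ht : 0 < t) :
    HasDerivAt (gLs s) (-(t + t ^ (s - 1)) * ((t + 1) / 2) ^ (-s - 1) / 8) t := by
  have hm : (0 : ℝ) < (t + 1) / 2 := by linarith
  have h2 : HasDerivAt (fun x : ℝ => (x + 1) / 2) (1 / 2) t := by
    simpa using ((hasDerivAt_id t).add_const 1).div_const 2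
  have hA : HasDerivAt (fun x : ℝ => ((x + 1) / 2) ^ (1 - s))
      ((1 - s) * ((t + 1) / 2) ^ (1 - s - 1) * (1 / 2)) t :=
    by have := (Real.hasDerivAt_rpow_const (p := 1 - s) (Or.inl hm.ne')).comp t h2; exact this
  have hC : HasDerivAt (fun x : ℝ => ((x + 1) / 2) ^ (-s))
      ((-s) * ((t + 1) / 2) ^ (-s - 1) * (1 / 2)) t :=
    by have := (Real.hasDerivAt_rpow_const (p := -s) (Or.inl hm.ne')).comp t h2; exact this
  have hB : HasDerivAt (fun x : ℝ => x ^ s + 1) (s * t ^ (s - 1)) t := by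
    simpa using (Real.hasDerivAt_rpow_const (p := s) (Or.inl ht.ne')).add_const 1
  have h5 := ((((hA.const_mul (s / 2)).add
      (((hB.mul hC).const_mul ((1 - s) / 4)))).sub_const (1 / 2)).const_mul ((s * (s - 1))⁻¹))
  have h6 : HasDerivAt (gLs s)
      ((s * (s - 1))⁻¹ *
        (s / 2 * ((1 - s) * ((t + 1) / 2) ^ (1 - s - 1) * (1 / 2)) +
          (1 - s) / 4 *
            (s * t ^ (s - 1) * ((t + 1) / 2) ^ (-s) +
              (t ^ s + 1) * ((-s) * ((t + 1) / 2) ^ (-s - 1) * (1 / 2))))) t := h5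
  have e1 : ((t + 1) / 2 : ℝ) ^ (1 - s - 1) = ((t + 1) / 2) * ((t + 1) / 2) ^ (-s - 1) := by
    rw [show (1 - s - 1 : ℝ) = 1 + (-s - 1) by ring, Real.rpow_add hm, Real.rpow_one]
  have e2 : ((t + 1) / 2 : ℝ) ^ (-s : ℝ) = ((t + 1) / 2) * ((t + 1) / 2) ^ (-s - 1) := by
    conv_lhs => rw [show (-s : ℝ) = 1 + (-s - 1) by ring]
    rw [Real.rpow_add hm, Real.rpow_one]
  have e3 : t ^ s = t * t ^ (s - 1) := by
    conv_lhs => rw [show (s : ℝ) = 1 + (s - 1) by ring]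
    rw [Real.rpow_add ht, Real.rpow_one]
  have hc : s * (s - 1) ≠ 0 := mul_ne_zero hs0 (sub_ne_zero.mpr hs1)
  have : ((s * (s - 1))⁻¹ *
        (s / 2 * ((1 - s) * ((t + 1) / 2) ^ (1 - s - 1) * (1 / 2)) +
          (1 - s) / 4 *
            (s * t ^ (s - 1) * ((t + 1) / 2) ^ (-s) +
              (t ^ s + 1) * ((-s) * ((t + 1) / 2) ^ (-s - 1) * (1 / 2)))))
      = -(t + t ^ (s - 1)) * ((t + 1) / 2) ^ (-s - 1) / 8 := by
    rw [e1, e2, e3]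
    field_simp
    ring
  rwa [this] at h6

lemma hasDerivAt_nLs (s : ℝ) (hs0 : s ≠ 0) (hs1 : s ≠ 1) {t : ℝ} (ht : 0 < t) :
    HasDerivAt (nLs s) (-(t + t ^ (s - 1)) * ((t + 1) / 2) ^ (-s - 1) / 8) t := by
  have heq : nLs s =ᶠ[nhds t] gLs s :=
    Filter.eventuallyEq_of_mem (Ioi_mem_nhds ht) fun x hx => nLs_eq s hx
  exact (hasDerivAt_gLs s hs0 hs1 ht).congr_of_eventuallyEq heq

/-- `n_{L_s}` is strictly decreasing on `(0,∞)`, vanishes at `1`, is positive on `(0,1)`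
and negative on `(1,∞)`. -/
theorem nLs_strictAnti_sign (s : ℝ) (hs0 : s ≠ 0) (hs1 : s ≠ 1) :
    StrictAntiOn (nLs s) (Set.Ioi (0 : ℝ)) ∧
    nLs s 1 = 0 ∧
    (∀ t : ℝ, 0 < t → t < 1 → 0 < nLs s t) ∧
    (∀ t : ℝ, 1 < t → nLs s t < 0) := by
  have hanti : StrictAntiOn (nLs s) (Set.Ioi (0 : ℝ)) := by
    apply strictAntiOn_of_deriv_neg (convex_Ioi 0)
    · exact fun x hx => (hasDerivAt_nLs s hs0 hs1 hx).continuousAt.continuousWithinAt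
    · intro x hx
      rw [interior_Ioi] at hx
      rw [(hasDerivAt_nLs s hs0 hs1 hx).deriv]
      have hx' : (0 : ℝ) < x := hx
      have h1 : (0 : ℝ) < x + x ^ (s - 1) := by
        have := Real.rpow_pos_of_pos hx' (s - 1); linarith
      have h2 : (0 : ℝ) < ((x + 1) / 2) ^ (-s - 1) :=
        Real.rpow_pos_of_pos (by linarith) _
      nlinarith
  have hzero : nLs s 1 = 0 := by
    rw [nLs_eq s one_pos, gLs]
    norm_num [Real.one_rpow]
    exact Or.inr (by ring)
  refine ⟨hanti, hzero, fun t ht0 ht1 => ?_, fun t ht1 => ?_⟩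
  · have := hanti ht0 (mem_Ioi.mpr one_pos) ht1
    rwa [hzero] at this
  · have := hanti (mem_Ioi.mpr one_pos) (mem_Ioi.mpr (lt_trans one_pos ht1)) ht1
    rwa [hzero] at this
end

section
/- Let f : (0,∞) → ℝ be twice differentiable at x = 1 with f(1) = 0 and f''(1) > 0. Fix Q = (q_1,…,q_n) ∈ Γ_n. Then the ratio C_f(P||Q)/χ²(P||Q) tends to f''(1)/2 as P tends to Q within Γ_n with P ≠ Q, where C_f(P||Q) = ∑_{i=1}^n q_i·f(p_i/q_i) and χ²(P||Q) = ∑_{i=1}^n (p_i − q_i)²/q_i. -/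
open scoped BigOperators
open Filter

lemma key_lemma_csiszar (f : ℝ → ℝ)
    (hf : ∀ᶠ x in nhds (1 : ℝ), DifferentiableAt ℝ f x)
    (hf' : DifferentiableAt ℝ (deriv f) 1)
    (hf1 : f 1 = 0) :
    Tendsto (fun x => (f x - deriv f 1 * (x - 1)) / (x - 1) ^ 2) (nhdsWithin 1 {(1:ℝ)}ᶜ)
      (nhds (deriv (deriv f) 1 / 2)) := by
  set c := deriv f 1 with hc
  have hlin : ∀ x : ℝ, HasDerivAt (fun x : ℝ => c * (x - 1)) c x := fun x => by
    simpa using (((hasDerivAt_id x).sub_const 1).const_mul c)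
  have hdg : ∀ᶠ x in nhds (1:ℝ), DifferentiableAt ℝ (fun x => f x - c * (x - 1)) x :=
    hf.mono fun x hx => hx.sub (hlin x).differentiableAt
  have hderiv_g : ∀ᶠ x in nhds (1:ℝ), deriv (fun x => f x - c * (x - 1)) x = deriv f x - c :=
    hf.mono fun x hx => ((hx.hasDerivAt.sub (hlin x))).deriv
  have hderiv_h : ∀ x : ℝ, deriv (fun x : ℝ => (x - 1) ^ 2) x = 2 * (x - 1) := by
    intro x
    have h1 : HasDerivAt (fun x : ℝ => x - 1) 1 x := (hasDerivAt_id x).sub_const 1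
    have : HasDerivAt (fun x : ℝ => (x - 1) ^ 2) (2 * (x - 1)) x := by simpa using h1.fun_pow 2
    exact this.deriv
  apply deriv.lhopital_zero_nhdsNE
  · exact eventually_nhdsWithin_of_eventually_nhds hdg
  · filter_upwards [eventually_mem_nhdsWithin] with x hx
    rw [hderiv_h]
    simp only [Set.mem_compl_iff, Set.mem_singleton_iff] at hx
    intro h
    rcases mul_eq_zero.1 h with h | h
    · norm_num at h
    · exact hx (by linarith)
  · have hcont : ContinuousAt (fun x => f x - c * (x - 1)) 1 :=
      (hf.self_of_nhds).continuousAt.sub (hlin 1).differentiableAt.continuousAt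
    have := hcont.tendsto
    simp only [hf1, sub_self, mul_zero, sub_zero] at this
    exact tendsto_nhdsWithin_of_tendsto_nhds (by simpa using this)
  · have : Tendsto (fun x : ℝ => (x - 1) ^ 2) (nhds 1) (nhds ((1 - 1)^2)) :=
      ((continuous_id.sub continuous_const).pow 2).tendsto 1
    exact tendsto_nhdsWithin_of_tendsto_nhds (by simpa using this)
  · have hslope : Tendsto (fun x => (deriv f x - deriv f 1) / (x - 1)) (nhdsWithin 1 {(1:ℝ)}ᶜ)
        (nhds (deriv (deriv f) 1)) := by
      have h2 := hf'.hasDerivAt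
      rw [hasDerivAt_iff_tendsto_slope] at h2
      exact h2.congr fun x => by simp [slope_def_field]
    have hhalf : Tendsto (fun x => (deriv f x - deriv f 1) / (x - 1) / 2) (nhdsWithin 1 {(1:ℝ)}ᶜ)
        (nhds (deriv (deriv f) 1 / 2)) := hslope.div_const 2
    refine hhalf.congr' ?_
    filter_upwards [eventually_nhdsWithin_of_eventually_nhds hderiv_g,
      eventually_mem_nhdsWithin] with x hx hx1
    have hne : x - 1 ≠ 0 := sub_ne_zero.2 hx1
    rw [hx, hderiv_h, ← hc, div_div, mul_comm]

/-- If `f` is twice differentiable at `1` with `f(1) = 0` and `f''(1) > 0`, then for a fixed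
`Q ∈ Γ_n`, the ratio `C_f(P‖Q)/χ²(P‖Q)` tends to `f''(1)/2` as `P → Q` within `Γ_n`, `P ≠ Q`. -/
theorem csiszar_div_chiSq_tendsto (f : ℝ → ℝ)
    (hf : ∀ᶠ x in nhds (1 : ℝ), DifferentiableAt ℝ f x)
    (hf' : DifferentiableAt ℝ (deriv f) 1)
    (hf1 : f 1 = 0) (hf'' : 0 < deriv (deriv f) 1)
    (n : ℕ) (hn : 2 ≤ n) (Q : Fin n → ℝ) (hQ : ∀ i, 0 < Q i) (hQ1 : ∑ i, Q i = 1) :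
    Tendsto (fun P : Fin n → ℝ =>
        (∑ i, Q i * f (P i / Q i)) / (∑ i, (P i - Q i) ^ 2 / Q i))
      (nhdsWithin Q {P : Fin n → ℝ | (∀ i, 0 < P i) ∧ (∑ i, P i = 1) ∧ P ≠ Q})
      (nhds (deriv (deriv f) 1 / 2)) := by
  have key := key_lemma_csiszar f hf hf' hf1
  set c := deriv f 1 with hc
  set k := deriv (deriv f) 1 with hk
  rw [Metric.tendsto_nhdsWithin_nhds] at key ⊢
  intro ε hε
  obtain ⟨δ₀, hδ₀, hkey⟩ := key (ε/2) (by linarith)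
  haveI : NeZero n := ⟨by omega⟩
  have hne : (Finset.univ : Finset (Fin n)).Nonempty := Finset.univ_nonempty
  set m := Finset.univ.inf' hne Q with hm
  have hm0 : 0 < m := by rw [hm]; exact (Finset.lt_inf'_iff hne).2 fun i _ => hQ i
  have hmle : ∀ i, m ≤ Q i := fun i => Finset.inf'_le _ (Finset.mem_univ i)
  refine ⟨δ₀ * m, by positivity, ?_⟩
  rintro P ⟨hP, hP1, hPne⟩ hdist
  have hxi : ∀ i, |P i / Q i - 1| < δ₀ := by
    intro i
    have h1 : dist (P i) (Q i) < δ₀ * m := lt_of_le_of_lt (dist_le_pi_dist P Q i) hdist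
    rw [Real.dist_eq] at h1
    have h2 : |P i - Q i| < δ₀ * Q i :=
      lt_of_lt_of_le h1 (by nlinarith [hmle i])
    have h3 : P i / Q i - 1 = (P i - Q i) / Q i := div_sub_one (hQ i).ne'
    rw [h3, abs_div, abs_of_pos (hQ i), div_lt_iff₀ (hQ i)]
    linarith [h2]
  have hterm : ∀ i, |Q i * f (P i / Q i) - c * (P i - Q i) - k / 2 * ((P i - Q i) ^ 2 / Q i)|
      ≤ ε / 2 * ((P i - Q i) ^ 2 / Q i) := by
    intro i
    by_cases h : P i = Q i
    · simp [h, div_self (ne_of_gt (hQ i)), hf1]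
    · set x := P i / Q i with hx
      have hq : Q i ≠ 0 := ne_of_gt (hQ i)
      have hx1 : x ≠ 1 := by
        rw [hx]; intro hcontra
        exact h ((div_eq_one_iff_eq hq).mp hcontra)
      have hxq : Q i * (x - 1) = P i - Q i := by rw [hx]; field_simp
      have hd : dist x 1 < δ₀ := by rw [Real.dist_eq]; exact hxi i
      have hb := hkey (by simpa using hx1) hd
      rw [Real.dist_eq] at hb
      have hne2 : (x - 1) ^ 2 ≠ 0 := pow_ne_zero 2 (sub_ne_zero.2 hx1)
      have h2 : |(f x - c * (x - 1)) - k / 2 * (x - 1) ^ 2| ≤ ε / 2 * (x - 1) ^ 2 := by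
        calc |(f x - c * (x - 1)) - k / 2 * (x - 1) ^ 2|
            = |(f x - c * (x - 1)) / (x - 1) ^ 2 - k / 2| * (x - 1) ^ 2 := by
              rw [← abs_of_nonneg (sq_nonneg (x - 1)), ← abs_mul]
              congr 1
              rw [abs_of_nonneg (sq_nonneg (x - 1)), sub_mul, div_mul_cancel₀ _ hne2]
          _ ≤ ε / 2 * (x - 1) ^ 2 :=
              mul_le_mul_of_nonneg_right (le_of_lt hb) (sq_nonneg _)
      have h3 : Q i * f x - c * (P i - Q i) - k / 2 * ((P i - Q i) ^ 2 / Q i)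
          = Q i * ((f x - c * (x - 1)) - k / 2 * (x - 1) ^ 2) := by
        rw [← hxq]; field_simp
      have h4 : (P i - Q i) ^ 2 / Q i = Q i * (x - 1) ^ 2 := by
        rw [← hxq]; field_simp
      rw [h3, h4, abs_mul, abs_of_pos (hQ i)]
      calc Q i * |(f x - c * (x - 1)) - k / 2 * (x - 1) ^ 2|
          ≤ Q i * (ε / 2 * (x - 1) ^ 2) := mul_le_mul_of_nonneg_left h2 (hQ i).le
        _ = ε / 2 * (Q i * (x - 1) ^ 2) := by ring
  set C := ∑ i, Q i * f (P i / Q i) with hC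
  set X := ∑ i, (P i - Q i) ^ 2 / Q i with hX
  have hXpos : 0 < X := by
    obtain ⟨i₀, hi₀⟩ := Function.ne_iff.mp hPne
    refine Finset.sum_pos' (fun i _ => div_nonneg (sq_nonneg _) (hQ i).le)
      ⟨i₀, Finset.mem_univ _, ?_⟩
    have hne3 : P i₀ - Q i₀ ≠ 0 := sub_ne_zero.2 hi₀
    have : (P i₀ - Q i₀) ^ 2 > 0 := by positivity
    exact div_pos this (hQ i₀)
  have hsplit : ∑ i, (Q i * f (P i / Q i) - c * (P i - Q i) - k / 2 * ((P i - Q i) ^ 2 / Q i))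
      = C - k / 2 * X := by
    rw [hC, hX]
    rw [Finset.sum_sub_distrib, Finset.sum_sub_distrib, ← Finset.mul_sum, ← Finset.mul_sum,
      Finset.sum_sub_distrib, hP1, hQ1]
    ring
  have hbound : |C - k / 2 * X| ≤ ε / 2 * X := by
    rw [← hsplit]
    calc |∑ i, (Q i * f (P i / Q i) - c * (P i - Q i) - k / 2 * ((P i - Q i) ^ 2 / Q i))|
        ≤ ∑ i, |Q i * f (P i / Q i) - c * (P i - Q i) - k / 2 * ((P i - Q i) ^ 2 / Q i)| :=
          Finset.abs_sum_le_sum_abs _ _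
      _ ≤ ∑ i, ε / 2 * ((P i - Q i) ^ 2 / Q i) :=
          Finset.sum_le_sum fun i _ => hterm i
      _ = ε / 2 * X := by rw [hX, Finset.mul_sum]
  rw [Real.dist_eq]
  have heq : C / X - k / 2 = (C - k / 2 * X) / X := by
    field_simp
  rw [heq, abs_div, abs_of_pos hXpos, div_lt_iff₀ hXpos]
  nlinarith [hbound, hXpos, hε]
end

section
/- Fix a real s with s ≠ 0 and s ≠ 1 and fix Q ∈ Γ_n. Then the ratio ξ_s(P||Q)/χ²(P||Q) tends to 1 as P tends to Q within Γ_n with P ≠ Q. -/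
open scoped BigOperators
open Filter

lemma aux1 (a : ℝ) : Tendsto (fun x : ℝ => (x ^ a - 1 - a * (x - 1)) / (x - 1) ^ 2)
    (nhdsWithin (1:ℝ) {(1:ℝ)}ᶜ) (nhds (a * (a - 1) / 2)) := by
  have hpos : ∀ᶠ x in nhdsWithin (1:ℝ) {(1:ℝ)}ᶜ, (0:ℝ) < x :=
    (eventually_gt_nhds one_pos).filter_mono nhdsWithin_le_nhds
  have hne : ∀ᶠ x in nhdsWithin (1:ℝ) {(1:ℝ)}ᶜ, x ≠ (1:ℝ) :=
    eventually_mem_nhdsWithin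
  apply HasDerivAt.lhopital_zero_nhdsNE (f' := fun x => a * x ^ (a-1) - a)
    (g' := fun x => 2 * (x - 1))
  · filter_upwards [hpos] with x hx
    have h1 : HasDerivAt (fun y:ℝ => y ^ a) (a * x ^ (a-1)) x :=
      Real.hasDerivAt_rpow_const (Or.inl hx.ne')
    have h2 : HasDerivAt (fun y:ℝ => a * (y - 1)) a x := by
      simpa using ((hasDerivAt_id x).sub_const 1).const_mul a
    exact (h1.sub_const 1).sub h2
  · filter_upwards with x
    simpa using ((hasDerivAt_id x).sub_const 1).fun_pow 2
  · filter_upwards [hne] with x hx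
    simpa [sub_eq_zero] using hx
  · have hc : ContinuousAt (fun x : ℝ => x ^ a - 1 - a * (x - 1)) 1 := by
      have := Real.continuousAt_rpow_const 1 a (Or.inl one_ne_zero)
      fun_prop
    have := hc.tendsto.mono_left (nhdsWithin_le_nhds (s := {(1:ℝ)}ᶜ))
    simpa using this
  · have hc : ContinuousAt (fun x : ℝ => (x - 1) ^ 2) 1 := by fun_prop
    have := hc.tendsto.mono_left (nhdsWithin_le_nhds (s := {(1:ℝ)}ᶜ))
    simpa using this
  · have hs' : HasDerivAt (fun y:ℝ => y ^ (a-1)) (a-1) 1 := by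
      simpa using Real.hasDerivAt_rpow_const (x := 1) (p := a - 1) (Or.inl one_ne_zero)
    have hsl := hasDerivAt_iff_tendsto_slope.mp hs'
    have := hsl.const_mul (a/2)
    apply Tendsto.congr' ?_ (by convert this using 2; ring)
    filter_upwards [hne] with x hx
    have hx1 : x - 1 ≠ 0 := sub_ne_zero.mpr hx
    simp only [slope_def_field, Real.one_rpow]
    field_simp

lemma aux2 (s : ℝ) (hs0 : s ≠ 0) (hs1 : s ≠ 1) :
    Tendsto (fun x : ℝ => (s*(s-1))⁻¹ * ((x ^ s + x ^ (1-s) - x - 1)/(x-1)^2))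
      (nhdsWithin (1:ℝ) {(1:ℝ)}ᶜ) (nhds 1) := by
  have hss : s * (s - 1) ≠ 0 := mul_ne_zero hs0 (sub_ne_zero.mpr hs1)
  have h := ((aux1 s).add (aux1 (1-s))).const_mul ((s*(s-1))⁻¹)
  have hval : (s*(s-1))⁻¹ * (s * (s - 1) / 2 + (1-s) * ((1-s) - 1) / 2) = 1 := by
    field_simp
    ring
  rw [hval] at h
  apply h.congr
  intro x
  rw [← add_div]
  ring_nf

/-- J-divergence of type `s`. -/
noncomputable def xiS (s : ℝ) {n : ℕ} (P Q : Fin n → ℝ) : ℝ :=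
  ∑ i, (s * (s - 1))⁻¹ *
    (P i ^ s * Q i ^ (1 - s) + P i ^ (1 - s) * Q i ^ s - (P i + Q i))

/-- Chi-square divergence. -/
noncomputable def chiSq {n : ℕ} (P Q : Fin n → ℝ) : ℝ :=
  ∑ i, (P i - Q i) ^ 2 / Q i

/-- For `s ≠ 0,1` and fixed `Q ∈ Γ_n`, `ξ_s(P‖Q)/χ²(P‖Q) → 1` as `P → Q` within `Γ_n`, `P ≠ Q`. -/
theorem xiS_div_chiSq_tendsto (s : ℝ) (hs0 : s ≠ 0) (hs1 : s ≠ 1)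
    (n : ℕ) (hn : 2 ≤ n) (Q : Fin n → ℝ) (hQ : ∀ i, 0 < Q i) (hQ1 : ∑ i, Q i = 1) :
    Tendsto (fun P : Fin n → ℝ => xiS s P Q / chiSq P Q)
      (nhdsWithin Q {P : Fin n → ℝ | (∀ i, 0 < P i) ∧ (∑ i, P i = 1) ∧ P ≠ Q})
      (nhds 1) := by
  haveI : Nonempty (Fin n) := ⟨⟨0, by omega⟩⟩
  set G : ℝ → ℝ := fun x => (s*(s-1))⁻¹ * ((x ^ s + x ^ (1-s) - x - 1)/(x-1)^2) with hG
  have hss : s * (s - 1) ≠ 0 := mul_ne_zero hs0 (sub_ne_zero.mpr hs1)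
  set m := Finset.univ.inf' Finset.univ_nonempty Q with hm
  have hm0 : 0 < m := by
    rw [hm, Finset.lt_inf'_iff]
    exact fun i _ => hQ i
  have hmle : ∀ i, m ≤ Q i := fun i => Finset.inf'_le Q (Finset.mem_univ i)
  rw [Metric.tendsto_nhdsWithin_nhds]
  intro ε hε
  obtain ⟨δ, hδ0, hδ⟩ := Metric.tendsto_nhdsWithin_nhds.mp (aux2 s hs0 hs1) (ε/2) (by positivity)
  refine ⟨δ * m, by positivity, ?_⟩
  rintro P ⟨hPpos, hPsum, hPne⟩ hdist
  -- each ratio is close to 1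
  have hclose : ∀ i, P i ≠ Q i → dist (G (P i / Q i)) 1 < ε / 2 := by
    intro i hi
    apply hδ
    · exact fun hmem => hi ((div_eq_one_iff_eq (hQ i).ne').mp hmem)
    · rw [Real.dist_eq]
      have : P i / Q i - 1 = (P i - Q i) / Q i := by
        rw [div_sub_one (hQ i).ne']
      rw [this, abs_div, abs_of_pos (hQ i)]
      rw [div_lt_iff₀ (hQ i)]
      calc |P i - Q i| = dist (P i) (Q i) := (Real.dist_eq _ _).symm
        _ ≤ dist P Q := dist_le_pi_dist P Q i
        _ < δ * m := hdist
        _ ≤ δ * Q i := by nlinarith [hmle i]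
  set w : Fin n → ℝ := fun i => (P i - Q i)^2 / Q i with hw
  have hw0 : ∀ i, 0 ≤ w i := by
    intro i
    simp only [hw]
    exact div_nonneg (sq_nonneg _) (hQ i).le
  have hχ : chiSq P Q = ∑ i, w i := rfl
  have hχpos : 0 < chiSq P Q := by
    obtain ⟨i, hi⟩ : ∃ i, P i ≠ Q i := by
      by_contra h
      push_neg at h
      exact hPne (funext h)
    rw [hχ]
    refine Finset.sum_pos' (fun j _ => hw0 j) ⟨i, Finset.mem_univ i, ?_⟩
    simp only [hw]
    have h1 : P i - Q i ≠ 0 := sub_ne_zero.mpr hi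
    have h2 := hQ i
    positivity
  have hxi : xiS s P Q = ∑ i, w i * G (P i / Q i) := by
    apply Finset.sum_congr rfl
    intro i _
    rcases eq_or_ne (P i) (Q i) with h | h
    · have hq := hQ i
      have h1 : Q i ^ s * Q i ^ (1-s) = Q i := by
        rw [← Real.rpow_add hq]; norm_num
      have h2 : Q i ^ (1-s) * Q i ^ s = Q i := by
        rw [← Real.rpow_add hq]; norm_num
      rw [h]
      simp only [hw, h, sub_self, h1, h2]
      norm_num
    · have hp := hPpos i
      have hq := hQ i
      have hPQ : P i - Q i ≠ 0 := sub_ne_zero.mpr h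
      have hx1 : P i / Q i - 1 = (P i - Q i) / Q i := by field_simp
      have hxs : (P i / Q i) ^ s = P i ^ s / Q i ^ s := Real.div_rpow hp.le hq.le s
      have hxs' : (P i / Q i) ^ (1-s) = P i ^ (1-s) / Q i ^ (1-s) :=
        Real.div_rpow hp.le hq.le (1-s)
      have hx2 : (P i / Q i - 1)^2 = (P i - Q i)^2 / Q i ^ 2 := by
        rw [hx1, div_pow]
      have hQQ : Q i ^ s * Q i ^ (1-s) = Q i := by
        rw [← Real.rpow_add hq]; norm_num
      have hQs : 0 < Q i ^ s := Real.rpow_pos_of_pos hq s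
      have hQ1s : 0 < Q i ^ (1-s) := Real.rpow_pos_of_pos hq (1-s)
      have key : w i * G (P i / Q i) = (s*(s-1))⁻¹ *
          (Q i * ((P i / Q i)^s + (P i / Q i)^(1-s) - (P i/Q i) - 1)) := by
        simp only [hG, hw]
        rw [hx2]
        field_simp
      rw [key, hxs, hxs']
      have : Q i * (P i ^ s / Q i ^ s + P i ^ (1-s) / Q i ^ (1-s) - P i / Q i - 1)
          = P i ^ s * Q i ^ (1-s) + P i ^ (1-s) * Q i ^ s - (P i + Q i) := by
        have e1 : Q i * (P i ^ s / Q i ^ s) = P i ^ s * Q i ^ (1-s) := by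
          rw [mul_div_assoc', div_eq_iff hQs.ne']
          linear_combination (-(P i ^ s)) * hQQ
        have e2 : Q i * (P i ^ (1-s) / Q i ^ (1-s)) = P i ^ (1-s) * Q i ^ s := by
          rw [mul_div_assoc', div_eq_iff hQ1s.ne']
          linear_combination (-(P i ^ (1-s))) * hQQ
        have e3 : Q i * (P i / Q i) = P i := by field_simp
        linear_combination e1 + e2 - e3
      rw [this]
  have hub : ∀ i, |w i * (G (P i / Q i) - 1)| ≤ w i * (ε/2) := by
    intro i
    rcases eq_or_ne (P i) (Q i) with h | h
    · have hwi : w i = 0 := by simp [hw, h]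
      simp [hwi]
    · rw [abs_mul, abs_of_nonneg (hw0 i)]
      refine mul_le_mul_of_nonneg_left ?_ (hw0 i)
      have := hclose i h
      rw [Real.dist_eq] at this
      exact this.le
  have hsum : |∑ i, w i * (G (P i/Q i) - 1)| ≤ (∑ i, w i) * (ε/2) :=
    calc |∑ i, w i * (G (P i/Q i) - 1)| ≤ ∑ i, |w i * (G (P i/Q i) - 1)| :=
          Finset.abs_sum_le_sum_abs _ _
      _ ≤ ∑ i, w i * (ε/2) := Finset.sum_le_sum (fun i _ => hub i)
      _ = (∑ i, w i) * (ε/2) := by rw [Finset.sum_mul]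
  have hnum : xiS s P Q - chiSq P Q = ∑ i, w i * (G (P i/Q i) - 1) := by
    rw [hxi, hχ, ← Finset.sum_sub_distrib]
    exact Finset.sum_congr rfl (fun i _ => by ring)
  rw [Real.dist_eq, div_sub_one hχpos.ne', abs_div, abs_of_pos hχpos, hnum, hχ]
  have hS : (0:ℝ) < ∑ i, w i := hχ ▸ hχpos
  calc |∑ i, w i * (G (P i/Q i) - 1)| / (∑ i, w i)
      ≤ ((∑ i, w i) * (ε/2)) / (∑ i, w i) := by
        exact div_le_div_of_nonneg_right hsum hS.le
      _ = ε/2 := by rw [mul_comm, mul_div_assoc, div_self hS.ne', mul_one]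
      _ < ε := by linarith
end

section
/- For all P, Q ∈ Γ_n the following chain of inequalities holds: (1/4)·Δ(P||Q) ≤ I(P||Q) ≤ h(P||Q) ≤ 4·d(P||Q) ≤ (1/8)·J(P||Q) ≤ T(P||Q) ≤ (1/16)·Ψ(P||Q). -/
set_option maxHeartbeats 1000000
open Real Set

/-- If `f 1 = 0`, `f` is differentiable on `(0,∞)` with derivative `f'`,
`f' ≤ 0` on `(0,1]` and `f' ≥ 0` on `[1,∞)`, then `f ≥ 0` on `(0,∞)`. -/
lemma nonneg_of_deriv_sign (f f' : ℝ → ℝ)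
    (hd : ∀ x : ℝ, 0 < x → HasDerivAt f (f' x) x)
    (h1 : f 1 = 0)
    (hneg : ∀ x : ℝ, 0 < x → x ≤ 1 → f' x ≤ 0)
    (hpos : ∀ x : ℝ, 1 ≤ x → 0 ≤ f' x) :
    ∀ x : ℝ, 0 < x → 0 ≤ f x := by
  have hmono : MonotoneOn f (Ici 1) := by
    apply monotoneOn_of_deriv_nonneg (convex_Ici 1)
    · exact fun x hx => ((hd x (lt_of_lt_of_le one_pos hx)).continuousAt).continuousWithinAt
    · intro x hx
      rw [interior_Ici] at hx
      exact ((hd x (lt_trans one_pos hx)).differentiableAt).differentiableWithinAt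
    · intro x hx
      rw [interior_Ici] at hx
      rw [(hd x (lt_trans one_pos hx)).deriv]
      exact hpos x hx.le
  have hanti : AntitoneOn f (Ioc 0 1) := by
    apply antitoneOn_of_deriv_nonpos (convex_Ioc 0 1)
    · exact fun x hx => ((hd x hx.1).continuousAt).continuousWithinAt
    · intro x hx
      rw [interior_Ioc] at hx
      exact ((hd x hx.1).differentiableAt).differentiableWithinAt
    · intro x hx
      rw [interior_Ioc] at hx
      rw [(hd x hx.1).deriv]
      exact hneg x hx.1 hx.2.le
  intro x hx
  rcases le_total 1 x with h | h
  · rw [← h1]; exact hmono (self_mem_Ici) h h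
  · rw [← h1]; exact hanti ⟨hx, h⟩ ⟨one_pos, le_refl 1⟩ h

/-- If `f 1 = 0` and `f' ≥ 0` on `(0,∞)` then `f ≥ 0` on `[1,∞)` and `f ≤ 0` on `(0,1]`. -/
lemma sign_of_deriv_nonneg (f f' : ℝ → ℝ)
    (hd : ∀ x : ℝ, 0 < x → HasDerivAt f (f' x) x)
    (h1 : f 1 = 0)
    (hpos : ∀ x : ℝ, 0 < x → 0 ≤ f' x) :
    (∀ x : ℝ, 1 ≤ x → 0 ≤ f x) ∧ (∀ x : ℝ, 0 < x → x ≤ 1 → f x ≤ 0) := by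
  have hmono : MonotoneOn f (Ioi 0) := by
    apply monotoneOn_of_deriv_nonneg (convex_Ioi 0)
    · exact fun x hx => ((hd x hx).continuousAt).continuousWithinAt
    · intro x hx
      rw [interior_Ioi] at hx
      exact ((hd x hx).differentiableAt).differentiableWithinAt
    · intro x hx
      rw [interior_Ioi] at hx
      rw [(hd x hx).deriv]
      exact hpos x hx
  constructor
  · intro x hx
    rw [← h1]
    exact hmono (mem_Ioi.2 one_pos) (mem_Ioi.2 (lt_of_lt_of_le one_pos hx)) hx
  · intro x hx hx1
    rw [← h1]
    exact hmono (mem_Ioi.2 hx) (mem_Ioi.2 one_pos) hx1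


/-- Padé bound core -/
lemma pade_core :
    (∀ x : ℝ, 1 ≤ x → 0 ≤ Real.log x - 2*(x-1)/(x+1)) ∧
    (∀ x : ℝ, 0 < x → x ≤ 1 → Real.log x - 2*(x-1)/(x+1) ≤ 0) := by
  apply sign_of_deriv_nonneg (f' := fun x => x⁻¹ - 4/((x+1)^2))
  · intro x hx
    have h1 : (x:ℝ) + 1 ≠ 0 := by positivity
    have H := ((((hasDerivAt_id' (𝕜 := ℝ)) (x := x)).sub_const 1).const_mul 2).div
      (((hasDerivAt_id' (𝕜 := ℝ)) (x := x)).add_const 1) h1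
    have := (Real.hasDerivAt_log (ne_of_gt hx)).sub H
    refine this.congr_deriv ?_
    ring_nf
  · simp
  · intro x hx
    rw [sub_nonneg, div_le_iff₀ (by positivity),
      show x⁻¹ * ((x+1)^2) = (x+1)^2 / x by field_simp, le_div_iff₀ hx]
    nlinarith [sq_nonneg (x-1)]

lemma pade_le {x : ℝ} (hx : 1 ≤ x) : 2*(x-1)/(x+1) ≤ Real.log x := by
  have := pade_core.1 x hx; linarith

lemma pade_ge {x : ℝ} (h0 : 0 < x) (hx : x ≤ 1) : Real.log x ≤ 2*(x-1)/(x+1) := by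
  have := pade_core.2 x h0 hx; linarith

/-- sqrt bound core : √x - 1/√x - log x -/
lemma sqrt_core :
    (∀ x : ℝ, 1 ≤ x → 0 ≤ Real.sqrt x - (Real.sqrt x)⁻¹ - Real.log x) ∧
    (∀ x : ℝ, 0 < x → x ≤ 1 → Real.sqrt x - (Real.sqrt x)⁻¹ - Real.log x ≤ 0) := by
  apply sign_of_deriv_nonneg
    (f' := fun x => 1/(2*Real.sqrt x) - (-(1/(2*Real.sqrt x)) / (Real.sqrt x)^2) - x⁻¹)
  · intro x hx
    have hs : Real.sqrt x ≠ 0 := by positivity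
    exact ((Real.hasDerivAt_sqrt (ne_of_gt hx)).sub
      ((Real.hasDerivAt_sqrt (ne_of_gt hx)).inv hs)).sub (Real.hasDerivAt_log (ne_of_gt hx))
  · simp
  · intro x hx
    obtain ⟨s, hs, rfl⟩ : ∃ s : ℝ, 0 < s ∧ s^2 = x :=
      ⟨Real.sqrt x, Real.sqrt_pos.2 hx, Real.sq_sqrt hx.le⟩
    rw [Real.sqrt_sq hs.le]
    have : 1/(2*s) - (-(1/(2*s)) / s^2) - (s^2)⁻¹ = (s - 1)^2 / (2 * s^3) := by
      field_simp
      ring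
    rw [this]
    positivity

lemma log_le_sqrt_bound {x : ℝ} (hx : 1 ≤ x) :
    Real.log x ≤ Real.sqrt x - (Real.sqrt x)⁻¹ := by
  have := sqrt_core.1 x hx; linarith

lemma log_ge_sqrt_bound {x : ℝ} (h0 : 0 < x) (hx : x ≤ 1) :
    Real.sqrt x - (Real.sqrt x)⁻¹ ≤ Real.log x := by
  have := sqrt_core.2 x h0 hx; linarith


-- derivative of the "I" part : t*(log 2 + log t - log (t+1)) + (log 2 - log (t+1))
lemma hasDerivI (t : ℝ) (ht : 0 < t) :
    HasDerivAt (fun t : ℝ => t*(Real.log 2 + Real.log t - Real.log (t+1)) +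
      (Real.log 2 - Real.log (t+1)))
      (Real.log 2 + Real.log t - Real.log (t+1)) t := by
  have ht1 : t + 1 ≠ 0 := by positivity
  have hlog1 : HasDerivAt (fun t : ℝ => Real.log (t+1)) (1/(t+1)) t := by
    have := (Real.hasDerivAt_log ht1).comp t ((hasDerivAt_id' (𝕜 := ℝ) (x := t)).add_const 1)
    exact this.congr_deriv (by simp)
  have hinner : HasDerivAt (fun t : ℝ => Real.log 2 + Real.log t - Real.log (t+1))
      (t⁻¹ - 1/(t+1)) t :=
    ((Real.hasDerivAt_log (ne_of_gt ht)).const_add (Real.log 2)).sub hlog1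
  have hmul := (hasDerivAt_id' (𝕜 := ℝ) (x := t)).mul hinner
  have hsecond : HasDerivAt (fun t : ℝ => Real.log 2 - Real.log (t+1)) (-(1/(t+1))) t :=
    (hlog1.const_sub (Real.log 2))
  have := hmul.add hsecond
  refine this.congr_deriv ?_
  field_simp
  ring

-- F1 : I(t) - Δ(t)/4  ≥ 0
lemma F1_nonneg : ∀ t : ℝ, 0 < t →
    0 ≤ (1/2)*(t*(Real.log 2 + Real.log t - Real.log (t+1)) + (Real.log 2 - Real.log (t+1)))
      - (1/4)*((t-1)^2/(t+1)) := by
  apply nonneg_of_deriv_sign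
    (f' := fun t => (1/2)*(Real.log 2 + Real.log t - Real.log (t+1)) - (t-1)*(t+3)/(4*(t+1)^2))
  · intro t ht
    have ht1 : t + 1 ≠ 0 := by positivity
    have hq : HasDerivAt (fun t : ℝ => (1/4)*((t-1)^2/(t+1)))
        ((t-1)*(t+3)/(4*(t+1)^2)) t := by
      have hnum : HasDerivAt (fun t : ℝ => (t-1)^2) (2*(t-1)) t := by
        have := ((hasDerivAt_id' (𝕜 := ℝ) (x := t)).sub_const 1).pow 2
        exact this.congr_deriv (by simp)
      have := (hnum.div ((hasDerivAt_id' (𝕜 := ℝ) (x := t)).add_const 1) ht1).const_mul (1/4 : ℝ)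
      refine this.congr_deriv ?_
      field_simp
      ring
    exact ((hasDerivI t ht).const_mul (1/2 : ℝ)).sub hq
  · norm_num
  · -- t ≤ 1 : f' ≤ 0
    intro t ht ht1
    have hx0 : (0:ℝ) < 2*t/(t+1) := by positivity
    have hx1 : 2*t/(t+1) ≤ 1 := by rw [div_le_one (by positivity)]; linarith
    have hlog : Real.log 2 + Real.log t - Real.log (t+1) ≤ 2*(t-1)/(3*t+1) := by
      have h := pade_ge hx0 hx1
      have e1 : Real.log (2*t/(t+1)) = Real.log 2 + Real.log t - Real.log (t+1) := by
        rw [Real.log_div (by positivity) (by positivity), Real.log_mul (by norm_num) (ne_of_gt ht)]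
      have e2 : 2*(2*t/(t+1)-1)/(2*t/(t+1)+1) = 2*(t-1)/(3*t+1) := by
        rw [div_eq_div_iff (by positivity) (by positivity)]
        field_simp
        ring
      rw [e1, e2] at h
      exact h
    have hfin : (1/2) * (2*(t-1)/(3*t+1)) ≤ (t-1)*(t+3)/(4*(t+1)^2) := by
      rw [show (1/2) * (2*(t-1)/(3*t+1)) = (t-1)/(3*t+1) by ring]
      rw [div_le_div_iff₀ (by positivity) (by positivity)]
      nlinarith [mul_nonneg (mul_nonneg (sub_nonneg.2 ht1) (sub_nonneg.2 ht1)) (sub_nonneg.2 ht1),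
        sub_nonneg.2 ht1]
    linarith
  · -- 1 ≤ t : 0 ≤ f'
    intro t ht
    have ht0 : (0:ℝ) < t := lt_of_lt_of_le one_pos ht
    have hx1 : 1 ≤ 2*t/(t+1) := by rw [le_div_iff₀ (by positivity)]; linarith
    have hlog : 2*(t-1)/(3*t+1) ≤ Real.log 2 + Real.log t - Real.log (t+1) := by
      have h := pade_le hx1
      have e1 : Real.log (2*t/(t+1)) = Real.log 2 + Real.log t - Real.log (t+1) := by
        rw [Real.log_div (by positivity) (by positivity), Real.log_mul (by norm_num) (ne_of_gt ht0)]
      have e2 : 2*(2*t/(t+1)-1)/(2*t/(t+1)+1) = 2*(t-1)/(3*t+1) := by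
        rw [div_eq_div_iff (by positivity) (by positivity)]
        field_simp
        ring
      rw [e1, e2] at h
      exact h
    have hfin : (t-1)*(t+3)/(4*(t+1)^2) ≤ (1/2) * (2*(t-1)/(3*t+1)) := by
      rw [show (1/2) * (2*(t-1)/(3*t+1)) = (t-1)/(3*t+1) by ring]
      rw [div_le_div_iff₀ (by positivity) (by positivity)]
      nlinarith [mul_nonneg (mul_nonneg (sub_nonneg.2 ht) (sub_nonneg.2 ht)) (sub_nonneg.2 ht)]
    linarith


-- key algebraic fact: s(s+1) ≤ √(2s²/(s²+1))·(s²+1)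
lemma key_sqrt {s : ℝ} (hs : 0 < s) :
    s*(s+1) ≤ Real.sqrt (2*s^2/(s^2+1)) * (s^2+1) := by
  have hle : s*(s+1)/(s^2+1) ≤ Real.sqrt (2*s^2/(s^2+1)) := by
    rw [Real.le_sqrt (by positivity) (by positivity)]
    rw [div_pow, div_le_div_iff₀ (by positivity) (by positivity)]
    nlinarith [sq_nonneg (s-1), sq_nonneg s, mul_pos hs hs, sq_nonneg (s*(s-1))]
  have := mul_le_mul_of_nonneg_right hle (by positivity : (0:ℝ) ≤ s^2+1)
  calc s*(s+1) = s*(s+1)/(s^2+1) * (s^2+1) := by field_simp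
  _ ≤ _ := this

lemma F2_nonneg : ∀ t : ℝ, 0 < t →
    0 ≤ (1/2)*(Real.sqrt t - 1)^2
      - (1/2)*(t*(Real.log 2 + Real.log t - Real.log (t+1)) + (Real.log 2 - Real.log (t+1))) := by
  apply nonneg_of_deriv_sign
    (f' := fun t => (1/2)*(1 - (Real.sqrt t)⁻¹)
      - (1/2)*(Real.log 2 + Real.log t - Real.log (t+1)))
  · intro t ht
    have hs : Real.sqrt t ≠ 0 := by positivity
    have h1 : HasDerivAt (fun t : ℝ => (1/2)*(Real.sqrt t - 1)^2)
        ((1/2)*(1 - (Real.sqrt t)⁻¹)) t := by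
      have := (((Real.hasDerivAt_sqrt (ne_of_gt ht)).sub_const 1).pow 2).const_mul (1/2 : ℝ)
      refine this.congr_deriv ?_
      have hs0 : (0:ℝ) < Real.sqrt t := Real.sqrt_pos.2 ht
      field_simp
      norm_num
    exact h1.sub ((hasDerivI t ht).const_mul (1/2 : ℝ))
  · norm_num
  · -- t ≤ 1 : need  1 - s⁻¹ ≤ L
    intro t ht ht1
    have hx0 : (0:ℝ) < 2*t/(t+1) := by positivity
    have hx1 : 2*t/(t+1) ≤ 1 := by rw [div_le_one (by positivity)]; linarith
    have hL := log_ge_sqrt_bound hx0 hx1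
    have e1 : Real.log (2*t/(t+1)) = Real.log 2 + Real.log t - Real.log (t+1) := by
      rw [Real.log_div (by positivity) (by positivity), Real.log_mul (by norm_num) (ne_of_gt ht)]
    rw [e1] at hL
    -- suffices : 1 - s⁻¹ ≤ A - A⁻¹
    set s := Real.sqrt t with hs_def
    have hs0 : 0 < s := Real.sqrt_pos.2 ht
    have hs2 : s^2 = t := Real.sq_sqrt ht.le
    have hs1 : s ≤ 1 := by
      rw [hs_def, show (1:ℝ) = Real.sqrt 1 by simp]
      exact Real.sqrt_le_sqrt ht1
    set A := Real.sqrt (2*t/(t+1)) with hA_def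
    have hA0 : 0 < A := Real.sqrt_pos.2 hx0
    have hA2 : A^2 = 2*t/(t+1) := Real.sq_sqrt hx0.le
    have hA2' : A^2*(s^2+1) = 2*s^2 := by
      rw [hA2, hs2]; field_simp
    have key : s*(s+1) ≤ A*(s^2+1) := by
      have e : 2*t/(t+1) = 2*s^2/(s^2+1) := by rw [hs2]
      rw [hA_def, e]; exact key_sqrt hs0
    have goal2 : 1 - s⁻¹ ≤ A - A⁻¹ := by
      have e3 : A - A⁻¹ = (A^2 - 1)/A := by field_simp
      have e4 : 1 - s⁻¹ = (s-1)/s := by field_simp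
      rw [e3, e4, div_le_div_iff₀ hs0 hA0]
      have h1 : A*(s^2+1)*(s-1) ≤ s*(s^2-1) := by nlinarith [key, hs1, hs0]
      have hx3 : A^2*s*(s^2+1) = 2*s^3 := by linear_combination s * hA2'
      nlinarith [h1, hx3, (by positivity : (0:ℝ) < s^2+1), hA0, hs0]
    linarith
  · -- 1 ≤ t
    intro t ht
    have ht0 : (0:ℝ) < t := lt_of_lt_of_le one_pos ht
    have hx1 : 1 ≤ 2*t/(t+1) := by rw [le_div_iff₀ (by positivity)]; linarith
    have hL := log_le_sqrt_bound hx1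
    have e1 : Real.log (2*t/(t+1)) = Real.log 2 + Real.log t - Real.log (t+1) := by
      rw [Real.log_div (by positivity) (by positivity), Real.log_mul (by norm_num) (ne_of_gt ht0)]
    rw [e1] at hL
    set s := Real.sqrt t with hs_def
    have hs0 : 0 < s := Real.sqrt_pos.2 ht0
    have hs2 : s^2 = t := Real.sq_sqrt ht0.le
    have hs1 : 1 ≤ s := by
      rw [hs_def, show (1:ℝ) = Real.sqrt 1 by simp]
      exact Real.sqrt_le_sqrt ht
    set A := Real.sqrt (2*t/(t+1)) with hA_def
    have hx0 : (0:ℝ) < 2*t/(t+1) := by positivity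
    have hA0 : 0 < A := Real.sqrt_pos.2 hx0
    have hA2 : A^2 = 2*t/(t+1) := Real.sq_sqrt hx0.le
    have hA2' : A^2*(s^2+1) = 2*s^2 := by
      rw [hA2, hs2]; field_simp
    have key : s*(s+1) ≤ A*(s^2+1) := by
      have e : 2*t/(t+1) = 2*s^2/(s^2+1) := by rw [hs2]
      rw [hA_def, e]; exact key_sqrt hs0
    have goal2 : A - A⁻¹ ≤ 1 - s⁻¹ := by
      have e3 : A - A⁻¹ = (A^2 - 1)/A := by field_simp
      have e4 : 1 - s⁻¹ = (s-1)/s := by field_simp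
      rw [e3, e4, div_le_div_iff₀ hA0 hs0]
      have h1 : s*(s^2-1) ≤ A*(s^2+1)*(s-1) := by nlinarith [key, hs1, hs0]
      have hx3 : A^2*s*(s^2+1) = 2*s^3 := by linear_combination s * hA2'
      nlinarith [h1, hx3, (by positivity : (0:ℝ) < s^2+1), hA0, hs0]
    linarith


lemma hasDerivLog1 (t : ℝ) (ht : 0 < t) :
    HasDerivAt (fun t : ℝ => Real.log (t+1)) (1/(t+1)) t := by
  have ht1 : t + 1 ≠ 0 := by positivity
  have := (Real.hasDerivAt_log ht1).comp t ((hasDerivAt_id' (𝕜 := ℝ) (x := t)).add_const 1)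
  exact this.congr_deriv (by simp)

lemma G_sign :
    (∀ t : ℝ, 1 ≤ t → 0 ≤ 4*(Real.log (t+1) - Real.log 2) - 3*Real.log t + (1 - t⁻¹)) ∧
    (∀ t : ℝ, 0 < t → t ≤ 1 → 4*(Real.log (t+1) - Real.log 2) - 3*Real.log t + (1 - t⁻¹) ≤ 0) := by
  apply sign_of_deriv_nonneg (f' := fun t => 4/(t+1) - 3*t⁻¹ + (t^2)⁻¹)
  · intro t ht
    have h1 := ((hasDerivLog1 t ht).sub_const (Real.log 2)).const_mul (4:ℝ)
    have h2 := (Real.hasDerivAt_log (ne_of_gt ht)).const_mul (3:ℝ)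
    have h3 : HasDerivAt (fun t : ℝ => 1 - t⁻¹) ((t^2)⁻¹) t := by
      have := (hasDerivAt_inv (ne_of_gt ht)).const_sub (1:ℝ)
      simpa using this
    have := (h1.sub h2).add h3
    refine this.congr_deriv ?_
    ring
  · norm_num
  · intro t ht
    have : 4/(t+1) - 3*t⁻¹ + (t^2)⁻¹ = (t-1)^2/(t^2*(t+1)) := by
      field_simp
      ring
    rw [this]
    positivity

lemma F5_nonneg : ∀ t : ℝ, 0 < t →
    0 ≤ ((t+1)/2)*(Real.log (t+1) - Real.log 2 - (1/2)*Real.log t)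
      - (1/8)*((t-1)*Real.log t) := by
  apply nonneg_of_deriv_sign
    (f' := fun t => (1/8)*(4*(Real.log (t+1) - Real.log 2) - 3*Real.log t + (1 - t⁻¹)))
  · intro t ht
    have hinner : HasDerivAt (fun t : ℝ => Real.log (t+1) - Real.log 2 - (1/2)*Real.log t)
        (1/(t+1) - (1/2)*t⁻¹) t :=
      ((hasDerivLog1 t ht).sub_const (Real.log 2)).sub
        ((Real.hasDerivAt_log (ne_of_gt ht)).const_mul (1/2 : ℝ))
    have hlin : HasDerivAt (fun t : ℝ => (t+1)/2) (1/2) t := by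
      have := ((hasDerivAt_id' (𝕜 := ℝ) (x := t)).add_const 1).div_const (2:ℝ)
      simpa using this
    have hmul := hlin.mul hinner
    have hsub := (((hasDerivAt_id' (𝕜 := ℝ) (x := t)).sub_const 1).mul
      (Real.hasDerivAt_log (ne_of_gt ht))).const_mul (1/8 : ℝ)
    have := hmul.sub hsub
    refine this.congr_deriv ?_
    have ht1 : t + 1 ≠ 0 := by positivity
    field_simp
    ring
  · norm_num
  · intro t ht ht1
    have := G_sign.2 t ht ht1
    linarith
  · intro t ht
    have := G_sign.1 t ht
    linarith


section pts
variable {a b : ℝ}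

lemma pt1 (ha : 0 < a) (hb : 0 < b) :
    (1/4) * ((a-b)^2/(a+b)) ≤
      (1/2) * (a * Real.log (2*a/(a+b)) + b * Real.log (2*b/(a+b))) := by
  obtain ⟨t, ht, rfl⟩ : ∃ t, 0 < t ∧ a = t*b := ⟨a/b, div_pos ha hb, by field_simp⟩
  have hb' : b ≠ 0 := ne_of_gt hb
  have ht1 : (0:ℝ) < t + 1 := by linarith
  have e1 : 2*(t*b)/(t*b+b) = 2*t/(t+1) := by
    rw [div_eq_div_iff (by positivity) (by positivity)]; ring
  have e2 : 2*b/(t*b+b) = 2/(t+1) := by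
    rw [div_eq_div_iff (by positivity) (by positivity)]; ring
  have e3 : (t*b-b)^2/(t*b+b) = b*((t-1)^2/(t+1)) := by
    field_simp
  have l1 : Real.log (2*t/(t+1)) = Real.log 2 + Real.log t - Real.log (t+1) := by
    rw [Real.log_div (by positivity) (by positivity), Real.log_mul (by norm_num) (ne_of_gt ht)]
  have l2 : Real.log (2/(t+1)) = Real.log 2 - Real.log (t+1) := by
    rw [Real.log_div (by norm_num) (by positivity)]
  rw [e1, e2, e3, l1, l2]
  nlinarith [mul_nonneg hb.le (F1_nonneg t ht)]

lemma pt2 (ha : 0 < a) (hb : 0 < b) :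
    (1/2) * (a * Real.log (2*a/(a+b)) + b * Real.log (2*b/(a+b))) ≤
      (1/2) * (Real.sqrt a - Real.sqrt b)^2 := by
  obtain ⟨t, ht, rfl⟩ : ∃ t, 0 < t ∧ a = t*b := ⟨a/b, div_pos ha hb, by field_simp⟩
  have ht1 : (0:ℝ) < t + 1 := by linarith
  have e1 : 2*(t*b)/(t*b+b) = 2*t/(t+1) := by
    rw [div_eq_div_iff (by positivity) (by positivity)]; ring
  have e2 : 2*b/(t*b+b) = 2/(t+1) := by
    rw [div_eq_div_iff (by positivity) (by positivity)]; ring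
  have e4 : (Real.sqrt (t*b) - Real.sqrt b)^2 = b*((Real.sqrt t - 1)^2) := by
    rw [Real.sqrt_mul ht.le]
    linear_combination (Real.sqrt t - 1)^2 * Real.sq_sqrt hb.le
  have l1 : Real.log (2*t/(t+1)) = Real.log 2 + Real.log t - Real.log (t+1) := by
    rw [Real.log_div (by positivity) (by positivity), Real.log_mul (by norm_num) (ne_of_gt ht)]
  have l2 : Real.log (2/(t+1)) = Real.log 2 - Real.log (t+1) := by
    rw [Real.log_div (by norm_num) (by positivity)]
  rw [e1, e2, e4, l1, l2]
  nlinarith [mul_nonneg hb.le (F2_nonneg t ht)]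

lemma pt3 (ha : 0 < a) (hb : 0 < b) :
    (1/2) * (Real.sqrt a - Real.sqrt b)^2 ≤
      4 * ((a+b)/2 - ((Real.sqrt a + Real.sqrt b)/2) * Real.sqrt ((a+b)/2)) := by
  obtain ⟨u, hu, rfl⟩ : ∃ u, 0 < u ∧ a = u^2 := ⟨Real.sqrt a, Real.sqrt_pos.2 ha, (Real.sq_sqrt ha.le).symm⟩
  obtain ⟨v, hv, rfl⟩ : ∃ v, 0 < v ∧ b = v^2 := ⟨Real.sqrt b, Real.sqrt_pos.2 hb, (Real.sq_sqrt hb.le).symm⟩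
  rw [Real.sqrt_sq hu.le, Real.sqrt_sq hv.le]
  set c := Real.sqrt ((u^2+v^2)/2) with hc_def
  have hc0 : 0 ≤ c := Real.sqrt_nonneg _
  have hc2 : c^2 = (u^2+v^2)/2 := Real.sq_sqrt (by positivity)
  have hc2' : 4*(u+v)^2*c^2 = 2*(u+v)^2*(u^2+v^2) := by linear_combination 4*(u+v)^2*hc2
  nlinarith [hc2', hc0, sq_nonneg ((u-v)^2), mul_nonneg hc0 (by positivity : (0:ℝ) ≤ u+v),
    sq_nonneg (u+v), sq_nonneg (u-v), mul_pos hu hv]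

lemma pt6 (ha : 0 < a) (hb : 0 < b) :
    ((a+b)/2) * Real.log ((a+b)/(2*Real.sqrt (a*b))) ≤
      (1/16) * ((a-b)^2*(a+b)/(a*b)) := by
  obtain ⟨u, hu, rfl⟩ : ∃ u, 0 < u ∧ a = u^2 := ⟨Real.sqrt a, Real.sqrt_pos.2 ha, (Real.sq_sqrt ha.le).symm⟩
  obtain ⟨v, hv, rfl⟩ : ∃ v, 0 < v ∧ b = v^2 := ⟨Real.sqrt b, Real.sqrt_pos.2 hb, (Real.sq_sqrt hb.le).symm⟩
  have e1 : Real.sqrt (u^2*v^2) = u*v := by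
    rw [show u^2*v^2 = (u*v)^2 by ring, Real.sqrt_sq (by positivity)]
  rw [e1]
  have hx0 : (0:ℝ) < (u^2+v^2)/(2*(u*v)) := by positivity
  have hlog := Real.log_le_sub_one_of_pos hx0
  have h1 : ((u^2+v^2)/2) * Real.log ((u^2+v^2)/(2*(u*v))) ≤
      ((u^2+v^2)/2) * ((u^2+v^2)/(2*(u*v)) - 1) :=
    mul_le_mul_of_nonneg_left hlog (by positivity)
  refine h1.trans ?_
  have expand : (u^2+v^2)/2 * ((u^2+v^2)/(2*(u*v)) - 1) = (u^2+v^2)*(u-v)^2/(4*(u*v)) := by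
    field_simp; ring
  rw [expand, show 1/16*((u^2-v^2)^2*(u^2+v^2)/(u^2*v^2))
      = (u^2-v^2)^2*(u^2+v^2)/(16*(u^2*v^2)) from by ring,
    div_le_div_iff₀ (by positivity) (by positivity)]
  nlinarith [mul_nonneg (mul_nonneg (mul_nonneg (mul_pos hu hv).le (sq_nonneg (u-v)))
    (sq_nonneg (u-v))) (by positivity : (0:ℝ) ≤ u^2+v^2)]

lemma pt4 (ha : 0 < a) (hb : 0 < b) :
    4 * ((a+b)/2 - ((Real.sqrt a + Real.sqrt b)/2) * Real.sqrt ((a+b)/2)) ≤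
      (1/8) * ((a-b) * Real.log (a/b)) := by
  obtain ⟨t, ht, rfl⟩ : ∃ t, 0 < t ∧ a = t*b := ⟨a/b, div_pos ha hb, by field_simp⟩
  obtain ⟨w, hw, rfl⟩ : ∃ w, 0 < w ∧ b = w^2 := ⟨Real.sqrt b, Real.sqrt_pos.2 hb, (Real.sq_sqrt hb.le).symm⟩
  obtain ⟨r, hr, rfl⟩ : ∃ r, 0 < r ∧ t = r^4 := by
    refine ⟨Real.sqrt (Real.sqrt t), by positivity, ?_⟩
    rw [show Real.sqrt (Real.sqrt t)^4 = (Real.sqrt (Real.sqrt t)^2)^2 by ring,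
      Real.sq_sqrt (Real.sqrt_nonneg t), Real.sq_sqrt ht.le]
  have e1 : Real.sqrt (r^4*w^2) = r^2*w := by
    rw [show r^4*w^2 = (r^2*w)^2 by ring, Real.sqrt_sq (by positivity)]
  have e2 : (r^4*w^2+w^2)/2 = w^2*((r^4+1)/2) := by ring
  set e := Real.sqrt ((r^4+1)/2) with he_def
  have he0 : 0 ≤ e := Real.sqrt_nonneg _
  have he2 : e^2 = (r^4+1)/2 := Real.sq_sqrt (by positivity)
  have e3 : Real.sqrt ((r^4*w^2+w^2)/2) = w*e := by
    rw [e2, Real.sqrt_mul (by positivity), Real.sqrt_sq hw.le]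
  have e4 : r^4*w^2/w^2 = r^4 := by field_simp
  have e5 : Real.log (r^4) = 4*Real.log r := by
    rw [show r^4 = r^4 by norm_num, Real.log_pow]; push_cast; ring
  rw [Real.sqrt_sq hw.le, e1, e3, e4, e5]
  -- J lower bound via Padé at r
  have hJ : 8*(r-1)^2*(r^2+1) ≤ (r^4-1)*(4*Real.log r) := by
    rcases le_total 1 r with h | h
    · have hp := pade_le h
      rw [div_le_iff₀ (by positivity : (0:ℝ) < r+1)] at hp
      have h0 : (0:ℝ) ≤ 4*(r-1)*(r^2+1) := by nlinarith [sq_nonneg r]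
      nlinarith [mul_le_mul_of_nonneg_left hp h0]
    · have hp := pade_ge hr h
      rw [le_div_iff₀ (by positivity : (0:ℝ) < r+1)] at hp
      have h0 : 4*(r-1)*(r^2+1) ≤ 0 := by nlinarith [sq_nonneg r]
      nlinarith [mul_le_mul_of_nonpos_left hp h0]
  -- key algebraic inequality
  have hA : (0:ℝ) < r^4+2*r^3-2*r^2+2*r+1 := by nlinarith [sq_nonneg (r-1), hr]
  have hsq : (2*(r^2+1)*e)^2 = (r^4+2*r^3-2*r^2+2*r+1)^2 + (r-1)^6*(r+1)^2 := by
    linear_combination 4*(r^2+1)^2*he2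
  have key : r^4+2*r^3-2*r^2+2*r+1 ≤ 2*(r^2+1)*e := by
    nlinarith [hsq, hA, he0, sq_nonneg ((r-1)^3*(r+1)), mul_nonneg (by positivity : (0:ℝ) ≤ 2*(r^2+1)) he0]
  have hL : 4*((r^4*w^2+w^2)/2 - ((r^2*w+w)/2)*(w*e)) = w^2*(2*(r^4+1) - 2*(r^2+1)*e) := by
    ring
  have hR : (1/8)*((r^4*w^2-w^2)*(4*Real.log r)) = w^2*((1/8)*((r^4-1)*(4*Real.log r))) := by
    ring
  rw [hL, hR]
  apply mul_le_mul_of_nonneg_left _ (sq_nonneg w)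
  have step : (1/8)*(8*(r-1)^2*(r^2+1)) ≤ (1/8)*((r^4-1)*(4*Real.log r)) := by linarith
  refine le_trans ?_ step
  nlinarith [key]

lemma pt5 (ha : 0 < a) (hb : 0 < b) :
    (1/8) * ((a-b) * Real.log (a/b)) ≤
      ((a+b)/2) * Real.log ((a+b)/(2*Real.sqrt (a*b))) := by
  obtain ⟨t, ht, rfl⟩ : ∃ t, 0 < t ∧ a = t*b := ⟨a/b, div_pos ha hb, by field_simp⟩
  have e1 : t*b/b = t := by field_simp
  have e2 : Real.sqrt (t*b*b) = Real.sqrt t * b := by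
    rw [show t*b*b = t*b^2 by ring, Real.sqrt_mul ht.le, Real.sqrt_sq hb.le]
  have hst : 0 < Real.sqrt t := Real.sqrt_pos.2 ht
  have e3 : (t*b+b)/(2*(Real.sqrt t * b)) = (t+1)/(2*Real.sqrt t) := by
    rw [div_eq_div_iff (by positivity) (by positivity)]; ring
  have e7 : Real.log ((t+1)/(2*Real.sqrt t)) =
      Real.log (t+1) - Real.log 2 - (1/2)*Real.log t := by
    rw [Real.log_div (by positivity) (by positivity),
      Real.log_mul (by norm_num) (by positivity), Real.log_sqrt ht.le]
    ring
  rw [e1, e2, e3, e7]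
  nlinarith [mul_nonneg hb.le (F5_nonneg t ht)]

end pts



open scoped BigOperators

/-- For all `P, Q ∈ Γ_n`:
`(1/4)Δ ≤ I ≤ h ≤ 4d ≤ (1/8)J ≤ T ≤ (1/16)Ψ`. -/
theorem divergence_inequalities (n : ℕ) (hn : 2 ≤ n) (P Q : Fin n → ℝ)
    (hP : ∀ i, 0 < P i) (hP1 : ∑ i, P i = 1)
    (hQ : ∀ i, 0 < Q i) (hQ1 : ∑ i, Q i = 1) :
    (1 / 4) * (∑ i, (P i - Q i) ^ 2 / (P i + Q i)) ≤
        (1 / 2) * (∑ i, P i * Real.log (2 * P i / (P i + Q i)) +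
          ∑ i, Q i * Real.log (2 * Q i / (P i + Q i))) ∧
    (1 / 2) * (∑ i, P i * Real.log (2 * P i / (P i + Q i)) +
        ∑ i, Q i * Real.log (2 * Q i / (P i + Q i))) ≤
      (1 / 2) * ∑ i, (Real.sqrt (P i) - Real.sqrt (Q i)) ^ 2 ∧
    (1 / 2) * (∑ i, (Real.sqrt (P i) - Real.sqrt (Q i)) ^ 2) ≤
      4 * (1 - ∑ i, ((Real.sqrt (P i) + Real.sqrt (Q i)) / 2) *
        Real.sqrt ((P i + Q i) / 2)) ∧
    4 * (1 - ∑ i, ((Real.sqrt (P i) + Real.sqrt (Q i)) / 2) *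
        Real.sqrt ((P i + Q i) / 2)) ≤
      (1 / 8) * ∑ i, (P i - Q i) * Real.log (P i / Q i) ∧
    (1 / 8) * (∑ i, (P i - Q i) * Real.log (P i / Q i)) ≤
      ∑ i, ((P i + Q i) / 2) * Real.log ((P i + Q i) / (2 * Real.sqrt (P i * Q i))) ∧
    (∑ i, ((P i + Q i) / 2) * Real.log ((P i + Q i) / (2 * Real.sqrt (P i * Q i)))) ≤
      (1 / 16) * ∑ i, (P i - Q i) ^ 2 * (P i + Q i) / (P i * Q i) := by
  have hsum : ∑ i, (P i + Q i)/2 = 1 := by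
    rw [← Finset.sum_div, Finset.sum_add_distrib, hP1, hQ1]; norm_num
  have hd : 4 * (1 - ∑ i, ((Real.sqrt (P i) + Real.sqrt (Q i)) / 2) *
      Real.sqrt ((P i + Q i) / 2)) =
      ∑ i, 4 * ((P i + Q i)/2 - ((Real.sqrt (P i) + Real.sqrt (Q i)) / 2) *
        Real.sqrt ((P i + Q i) / 2)) := by
    rw [← hsum, ← Finset.sum_sub_distrib, Finset.mul_sum]
  refine ⟨?_, ?_, ?_, ?_, ?_, ?_⟩
  · rw [← Finset.sum_add_distrib, Finset.mul_sum, Finset.mul_sum]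
    exact Finset.sum_le_sum fun i _ => by
      simpa [mul_div_assoc] using pt1 (hP i) (hQ i)
  · rw [← Finset.sum_add_distrib, Finset.mul_sum, Finset.mul_sum]
    exact Finset.sum_le_sum fun i _ => pt2 (hP i) (hQ i)
  · rw [hd, Finset.mul_sum]
    exact Finset.sum_le_sum fun i _ => pt3 (hP i) (hQ i)
  · rw [hd, Finset.mul_sum]
    exact Finset.sum_le_sum fun i _ => pt4 (hP i) (hQ i)
  · rw [Finset.mul_sum]
    exact Finset.sum_le_sum fun i _ => pt5 (hP i) (hQ i)
  · rw [Finset.mul_sum]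
    exact Finset.sum_le_sum fun i _ => pt6 (hP i) (hQ i)
end
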